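/- Ramanujan's general identity (Entry 4): for real numbers x ≥ 0, n ≥ 0, a ≥ 0 with n + a > 0, the sequence of truncated nested radicals G m x converges to x + n + a as m → ∞; that is, x + n + a = √(ax + (n+a)² + x√(a(x+n) + (n+a)² + (x+n)√(...))). -/
import Mathlib


noncomputable def G (n a : ℝ) : ℕ → ℝ → ℝ
  | 0, _ => 0
  | m + 1, y => Real.sqrt (a * y + (n + a) ^ 2 + y * G n a m (y + n))

lemma G_nonneg (n a : ℝ) (m : ℕ) (y : ℝ) : 0 ≤ G n a m y := by
  cases m with
  | zero => simp [G]
  | succ m => exact Real.sqrt_nonneg _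

lemma G_le (n a : ℝ) (hn : 0 ≤ n) (ha : 0 ≤ a) :
    ∀ m, ∀ y : ℝ, 0 ≤ y → G n a m y ≤ y + n + a := by
  intro m
  induction m with
  | zero => intro y hy; simp [G]; positivity
  | succ m ih =>
    intro y hy
    have h1 := ih (y + n) (by linarith)
    have h0 := G_nonneg n a m (y + n)
    have key : a * y + (n + a) ^ 2 + y * G n a m (y + n) ≤ (y + n + a) ^ 2 := by nlinarith
    calc G n a (m+1) y = Real.sqrt (a * y + (n + a) ^ 2 + y * G n a m (y + n)) := rfl
      _ ≤ Real.sqrt ((y + n + a) ^ 2) := Real.sqrt_le_sqrt key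
      _ = y + n + a := by rw [Real.sqrt_sq (by linarith)]

lemma G_ge (n a : ℝ) (hn : 0 ≤ n) (ha : 0 ≤ a) (m : ℕ) (y : ℝ) (hy : 0 ≤ y) :
    n + a ≤ G n a (m + 1) y := by
  have h0 := G_nonneg n a m (y + n)
  have : (n + a) ^ 2 ≤ a * y + (n + a) ^ 2 + y * G n a m (y + n) := by nlinarith
  calc n + a = Real.sqrt ((n + a) ^ 2) := by rw [Real.sqrt_sq (by linarith)]
    _ ≤ Real.sqrt (a * y + (n + a) ^ 2 + y * G n a m (y + n)) := Real.sqrt_le_sqrt this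
    _ = G n a (m + 1) y := rfl

lemma G_rec (n a : ℝ) (hn : 0 ≤ n) (ha : 0 ≤ a) (hna : 0 < n + a) (m : ℕ) (y : ℝ)
    (hy : 0 ≤ y) :
    y + n + a - G n a (m + 1) y ≤
      y / (y + 2 * (n + a)) * (y + n + n + a - G n a m (y + n)) := by
  set g := G n a (m + 1) y with hgdef
  have harg : 0 ≤ a * y + (n + a) ^ 2 + y * G n a m (y + n) := by
    have := G_nonneg n a m (y + n); nlinarith
  have hg2 : g ^ 2 = a * y + (n + a) ^ 2 + y * G n a m (y + n) := by
    rw [hgdef]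
    show Real.sqrt _ ^ 2 = _
    exact Real.sq_sqrt harg
  have hgge : n + a ≤ g := G_ge n a hn ha m y hy
  have hgle : g ≤ y + n + a := G_le n a hn ha (m + 1) y hy
  have hE : G n a m (y + n) ≤ y + n + n + a := by
    have := G_le n a hn ha m (y + n) (by linarith)
    linarith
  have hpos : 0 < y + 2 * (n + a) := by linarith
  rw [div_mul_eq_mul_div, le_div_iff₀ hpos]
  nlinarith [mul_nonneg hy (sub_nonneg.2 hE), mul_nonneg (sub_nonneg.2 hgle) (sub_nonneg.2 hgge)]

noncomputable def Bnd (n a x : ℝ) : ℕ → ℕ → ℝ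
  | 0, k => x + (k : ℝ) * n + (n + a)
  | m + 1, k => (x + (k : ℝ) * n) / (x + (k : ℝ) * n + 2 * (n + a)) * Bnd n a x m (k + 1)

lemma D_le_B (n a x : ℝ) (hn : 0 ≤ n) (ha : 0 ≤ a) (hx : 0 ≤ x) (hna : 0 < n + a) :
    ∀ m k : ℕ, x + (k : ℝ) * n + (n + a) - G n a m (x + (k : ℝ) * n) ≤ Bnd n a x m k := by
  intro m
  induction m with
  | zero => intro k; simp [G, Bnd]
  | succ m ih =>
    intro k
    have hy : (0:ℝ) ≤ x + (k : ℝ) * n := by positivity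
    have hrec := G_rec n a hn ha hna m (x + (k : ℝ) * n) hy
    have hcast : x + (k : ℝ) * n + n = x + ((k + 1 : ℕ) : ℝ) * n := by push_cast; ring
    have hc : (0:ℝ) ≤ (x + (k : ℝ) * n) / (x + (k : ℝ) * n + 2 * (n + a)) := by positivity
    have ih' := ih (k + 1)
    calc x + (k : ℝ) * n + (n + a) - G n a (m + 1) (x + (k : ℝ) * n)
        ≤ (x + (k : ℝ) * n) / (x + (k : ℝ) * n + 2 * (n + a)) *
            (x + (k : ℝ) * n + n + n + a - G n a m (x + (k : ℝ) * n + n)) := by linarith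
      _ = (x + (k : ℝ) * n) / (x + (k : ℝ) * n + 2 * (n + a)) *
            (x + ((k + 1 : ℕ) : ℝ) * n + (n + a) - G n a m (x + ((k + 1 : ℕ) : ℝ) * n)) := by
          rw [← hcast]; ring_nf
      _ ≤ (x + (k : ℝ) * n) / (x + (k : ℝ) * n + 2 * (n + a)) * Bnd n a x m (k + 1) :=
          mul_le_mul_of_nonneg_left ih' hc
      _ = Bnd n a x (m + 1) k := rfl

lemma Bnd_le (n a x : ℝ) (hn : 0 ≤ n) (ha : 0 ≤ a) (hx : 0 ≤ x) (hna : 0 < n + a) :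
    ∀ m k : ℕ, Bnd n a x m k ≤
      (x + (k : ℝ) * n + (n + a)) ^ 2 / (x + ((k + m : ℕ) : ℝ) * n + (n + a)) := by
  intro m
  induction m with
  | zero =>
    intro k
    have hpos : (0:ℝ) < x + (k : ℝ) * n + (n + a) := by positivity
    simp only [Bnd, Nat.add_zero]
    rw [le_div_iff₀ hpos]
    nlinarith
  | succ m ih =>
    intro k
    set t := x + (k : ℝ) * n with ht
    have htn : (0:ℝ) ≤ t := by rw [ht]; positivity
    have hs : (0:ℝ) < n + a := hna
    have hden : (0:ℝ) < t + 2 * (n + a) := by linarith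
    have hd2 : (0:ℝ) < x + ((k + 1 + m : ℕ) : ℝ) * n + (n + a) := by positivity
    have hcast : x + ((k + 1 : ℕ) : ℝ) * n = t + n := by rw [ht]; push_cast; ring
    have ih' := ih (k + 1)
    have hc : (0:ℝ) ≤ t / (t + 2 * (n + a)) := by positivity
    have key : t / (t + 2 * (n + a)) * (t + n + (n + a)) ^ 2 ≤ (t + (n + a)) ^ 2 := by
      rw [div_mul_eq_mul_div, div_le_iff₀ hden]
      nlinarith [mul_nonneg (mul_nonneg htn htn) (sub_nonneg.2 (by linarith : n ≤ n + a)),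
        mul_nonneg htn (sq_nonneg (n + a)), sq_nonneg (n + a),
        mul_nonneg htn (sub_nonneg.2 (by linarith : n ≤ n + a))]
    have hcast2 : ((k + 1 + m : ℕ) : ℝ) = ((k + (m + 1) : ℕ) : ℝ) := by push_cast; ring
    calc Bnd n a x (m + 1) k
        = t / (t + 2 * (n + a)) * Bnd n a x m (k + 1) := rfl
      _ ≤ t / (t + 2 * (n + a)) *
            ((x + ((k + 1 : ℕ) : ℝ) * n + (n + a)) ^ 2 /
              (x + ((k + 1 + m : ℕ) : ℝ) * n + (n + a))) := mul_le_mul_of_nonneg_left ih' hc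
      _ = t / (t + 2 * (n + a)) * (t + n + (n + a)) ^ 2 /
            (x + ((k + 1 + m : ℕ) : ℝ) * n + (n + a)) := by rw [hcast]; ring
      _ ≤ (t + (n + a)) ^ 2 / (x + ((k + 1 + m : ℕ) : ℝ) * n + (n + a)) :=
          (div_le_div_iff_of_pos_right hd2).mpr key
      _ = (x + (k : ℝ) * n + (n + a)) ^ 2 / (x + ((k + (m + 1) : ℕ) : ℝ) * n + (n + a)) := by
          rw [hcast2, ht]

lemma Bnd_eq_of_n_zero (a x : ℝ) :
    ∀ m k : ℕ, Bnd 0 a x m k = (x / (x + 2 * a)) ^ m * (x + a) := by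
  intro m
  induction m with
  | zero => intro k; simp [Bnd]
  | succ m ih =>
    intro k
    show (x + (k : ℝ) * 0) / (x + (k : ℝ) * 0 + 2 * (0 + a)) * Bnd 0 a x m (k + 1) = _
    rw [ih (k + 1)]
    ring

theorem ramanujan_entry_four (n a x : ℝ) (hn : 0 ≤ n) (ha : 0 ≤ a) (hx : 0 ≤ x)
    (hna : 0 < n + a) :
    Filter.Tendsto (fun m => G n a m x) Filter.atTop (nhds (x + n + a)) := by
  have hDB : ∀ m : ℕ, x + n + a - G n a m x ≤ Bnd n a x m 0 := by
    intro m
    have := D_le_B n a x hn ha hx hna m 0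
    simp only [Nat.cast_zero, zero_mul, add_zero] at this
    linarith
  have hLB : ∀ m : ℕ, 0 ≤ x + n + a - G n a m x := by
    intro m
    have := G_le n a hn ha m x hx
    linarith
  have key : Filter.Tendsto (fun m => x + n + a - G n a m x) Filter.atTop (nhds 0) := by
    rcases eq_or_lt_of_le hn with h0 | hpos
    · -- n = 0
      subst h0
      have ha' : 0 < a := by linarith
      apply squeeze_zero hLB
        (fun m => le_trans (hDB m) (le_of_eq (Bnd_eq_of_n_zero a x m 0)))
      have hr0 : (0:ℝ) ≤ x / (x + 2 * a) := by positivity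
      have hr1 : x / (x + 2 * a) < 1 := by
        rw [div_lt_one (by linarith)]; linarith
      simpa using (tendsto_pow_atTop_nhds_zero_of_lt_one hr0 hr1).mul_const (x + a)
    · -- n > 0
      have hub : ∀ m : ℕ, x + n + a - G n a m x ≤
          (x + (n + a)) ^ 2 / (x + (m : ℝ) * n + (n + a)) := by
        intro m
        have h := Bnd_le n a x hn ha hx hna m 0
        simp only [Nat.cast_zero, zero_mul, add_zero, Nat.zero_add] at h
        exact le_trans (hDB m) (by linarith)
      apply squeeze_zero hLB hub
      apply Filter.Tendsto.div_atTop tendsto_const_nhds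
      apply Filter.tendsto_atTop_add_const_right
      apply Filter.tendsto_atTop_add_const_left
      exact Filter.Tendsto.atTop_mul_const hpos tendsto_natCast_atTop_atTop
  have h2 := Filter.Tendsto.const_sub (x + n + a) key
  simpa using h2
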